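/- arXiv:1312.1143 — 3 statements merged into one kernel-verified Lean document; each statement's English description precedes it below -/
import Mathlib

section
/- Let n, t, ℓ be positive integers with ℓ ≤ t. Every graph of order n with at least (1 − 1/t)·n²/2 edges contains at least (n/t)^ℓ · C(t, ℓ) copies of K_ℓ. -/
open Finset SimpleGraph

variable {n : ℕ} (G : SimpleGraph (Fin n)) [DecidableRel G.Adj]

/-- The finset of common neighbors of all vertices in `W`. -/
private def LS.cn (G : SimpleGraph (Fin n)) [DecidableRel G.Adj] (W : Finset (Fin n)) :
    Finset (Fin n) :=
  Finset.univ.filter (fun v => ∀ w ∈ W, G.Adj v w)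

namespace LS

lemma mem_cn {W : Finset (Fin n)} {v : Fin n} : v ∈ cn G W ↔ ∀ w ∈ W, G.Adj v w := by
  simp [cn]

lemma not_mem_of_mem_cn {W : Finset (Fin n)} {v : Fin n} (h : v ∈ cn G W) : v ∉ W := by
  intro hv
  exact G.irrefl ((mem_cn G).1 h v hv)

lemma insert_mem_clique {s : ℕ} {W : Finset (Fin n)} (hW : W ∈ G.cliqueFinset s)
    {v : Fin n} (hv : v ∈ cn G W) : insert v W ∈ G.cliqueFinset (s + 1) := by
  rw [mem_cliqueFinset_iff] at *
  exact hW.insert ((mem_cn G).1 hv)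

lemma erase_mem_clique {s : ℕ} {T : Finset (Fin n)} (hT : T ∈ G.cliqueFinset (s + 1))
    {u : Fin n} (hu : u ∈ T) :
    T.erase u ∈ G.cliqueFinset s ∧ u ∈ cn G (T.erase u) := by
  rw [mem_cliqueFinset_iff] at hT
  refine ⟨?_, ?_⟩
  · rw [mem_cliqueFinset_iff]
    exact ⟨hT.1.subset (by exact_mod_cast Finset.coe_subset.2 (erase_subset _ _)),
      by rw [card_erase_of_mem hu, hT.2]; omega⟩

  · rw [mem_cn]
    intro w hw
    exact hT.1 (Finset.mem_coe.2 hu) (Finset.mem_coe.2 (mem_of_mem_erase hw))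
      (Ne.symm (ne_of_mem_erase hw))

/-- Double counting pairs (clique of size `s`, vertex completing it). -/
lemma pair_sum (s : ℕ) (f : Finset (Fin n) → ℕ) :
    ∑ T ∈ G.cliqueFinset (s + 1), ∑ u ∈ T, f (T.erase u)
      = ∑ W ∈ G.cliqueFinset s, ∑ _v ∈ cn G W, f W := by
  rw [Finset.sum_sigma', Finset.sum_sigma']
  refine Finset.sum_nbij' (fun x => ⟨x.1.erase x.2, x.2⟩)
    (fun y => ⟨insert y.2 y.1, y.2⟩) ?_ ?_ ?_ ?_ ?_
  · rintro ⟨T, u⟩ hx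
    rw [Finset.mem_sigma] at hx
    obtain ⟨h1, h2⟩ := erase_mem_clique G hx.1 hx.2
    exact Finset.mem_sigma.2 ⟨h1, h2⟩
  · rintro ⟨W, v⟩ hy
    rw [Finset.mem_sigma] at hy
    exact Finset.mem_sigma.2 ⟨insert_mem_clique G hy.1 hy.2, Finset.mem_insert_self _ _⟩
  · rintro ⟨T, u⟩ hx
    rw [Finset.mem_sigma] at hx
    simp [Finset.insert_erase hx.2]
  · rintro ⟨W, v⟩ hy
    rw [Finset.mem_sigma] at hy
    simp [Finset.erase_insert (not_mem_of_mem_cn G hy.2)]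
  · rintro ⟨T, u⟩ _
    rfl

lemma sum_cn_card (s : ℕ) :
    ∑ W ∈ G.cliqueFinset s, (cn G W).card = (s + 1) * (G.cliqueFinset (s + 1)).card := by
  have h := pair_sum G s (fun _ => 1)
  have hL : ∑ T ∈ G.cliqueFinset (s + 1), ∑ _u ∈ T, (1 : ℕ)
      = (s + 1) * (G.cliqueFinset (s + 1)).card := by
    rw [Finset.sum_congr rfl (fun T hT => ?_), Finset.sum_const, smul_eq_mul, mul_comm]
    rw [Finset.sum_const, smul_eq_mul, mul_one,
      ((mem_cliqueFinset_iff.1 hT)).2]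
  have hR : ∑ W ∈ G.cliqueFinset s, ∑ _v ∈ cn G W, (1 : ℕ)
      = ∑ W ∈ G.cliqueFinset s, (cn G W).card := by
    simp
  rw [← hR, ← h, hL]

lemma local_bound {s : ℕ} {T : Finset (Fin n)} (hT : T ∈ G.cliqueFinset (s + 1)) :
    ∑ u ∈ T, (cn G (T.erase u)).card ≤ s * (cn G T).card + n := by
  have hcard : ∀ u : Fin n, (cn G (T.erase u)).card
      = ∑ x : Fin n, if x ∈ cn G (T.erase u) then 1 else 0 := by
    intro u
    rw [Finset.sum_ite_mem, Finset.univ_inter, Finset.sum_const, smul_eq_mul, mul_one]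
  calc ∑ u ∈ T, (cn G (T.erase u)).card
      = ∑ x : Fin n, ∑ u ∈ T, (if x ∈ cn G (T.erase u) then 1 else 0) := by
        simp_rw [hcard]; rw [Finset.sum_comm]
    _ ≤ ∑ x : Fin n, (if x ∈ cn G T then s + 1 else 1) := by
        refine Finset.sum_le_sum (fun x _ => ?_)
        by_cases hx : x ∈ cn G T
        · rw [if_pos hx]
          calc ∑ u ∈ T, (if x ∈ cn G (T.erase u) then 1 else 0)
              ≤ ∑ _u ∈ T, 1 := Finset.sum_le_sum (fun u _ => by split <;> omega)
            _ = s + 1 := by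
                rw [Finset.sum_const, smul_eq_mul, mul_one, ((mem_cliqueFinset_iff.1 hT)).2]
        · rw [if_neg hx]
          rw [mem_cn] at hx
          push_neg at hx
          obtain ⟨w, hwT, hwx⟩ := hx
          have : ∑ u ∈ T, (if x ∈ cn G (T.erase u) then 1 else 0)
              = (T.filter (fun u => x ∈ cn G (T.erase u))).card := by
            rw [Finset.card_filter]
          rw [this]
          rw [Finset.card_le_one]
          intro a ha b hb
          rw [Finset.mem_filter] at ha hb
          have hwa : w = a := by
            by_contra hne
            exact hwx ((mem_cn G).1 ha.2 w (Finset.mem_erase.2 ⟨hne, hwT⟩))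
          have hwb : w = b := by
            by_contra hne
            exact hwx ((mem_cn G).1 hb.2 w (Finset.mem_erase.2 ⟨hne, hwT⟩))
          rw [← hwa, ← hwb]
    _ = s * (cn G T).card + n := by
        have : ∀ x : Fin n, (if x ∈ cn G T then s + 1 else 1)
            = (if x ∈ cn G T then s else 0) + 1 := by
          intro x; split <;> rfl
        simp_rw [this]
        rw [Finset.sum_add_distrib, Finset.sum_ite_mem, Finset.univ_inter, Finset.sum_const,
          Finset.sum_const, smul_eq_mul, smul_eq_mul, mul_one, Finset.card_univ,
          Fintype.card_fin, mul_comm]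

lemma sum_sq_bound (s : ℕ) :
    ∑ W ∈ G.cliqueFinset s, (cn G W).card ^ 2
      ≤ s * ((s + 2) * (G.cliqueFinset (s + 2)).card) + n * (G.cliqueFinset (s + 1)).card := by
  have h := pair_sum G s (fun W => (cn G W).card)
  have hR : ∑ W ∈ G.cliqueFinset s, ∑ _v ∈ cn G W, (cn G W).card
      = ∑ W ∈ G.cliqueFinset s, (cn G W).card ^ 2 := by
    refine Finset.sum_congr rfl (fun W _ => ?_)
    rw [Finset.sum_const, smul_eq_mul, sq]
  rw [← hR, ← h]
  calc ∑ T ∈ G.cliqueFinset (s + 1), ∑ u ∈ T, (cn G (T.erase u)).card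
      ≤ ∑ T ∈ G.cliqueFinset (s + 1), (s * (cn G T).card + n) :=
        Finset.sum_le_sum (fun T hT => local_bound G hT)
    _ = s * ((s + 2) * (G.cliqueFinset (s + 2)).card) + n * (G.cliqueFinset (s + 1)).card := by
        rw [Finset.sum_add_distrib, ← Finset.mul_sum, Finset.sum_const, smul_eq_mul,
          sum_cn_card G (s + 1)]
        ring_nf

lemma clique_zero : (G.cliqueFinset 0).card = 1 := by
  have : G.cliqueFinset 0 = {∅} := by
    ext W
    simp [mem_cliqueFinset_iff, isNClique_zero]
  rw [this, Finset.card_singleton]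

lemma clique_one : (G.cliqueFinset 1).card = n := by
  have : G.cliqueFinset 1 = Finset.univ.map ⟨fun v => {v}, fun a b h => by simpa using h⟩ := by
    ext W
    simp [mem_cliqueFinset_iff, isNClique_one, eq_comm]
    exact Iff.rfl
  rw [this, Finset.card_map, Finset.card_univ, Fintype.card_fin]

lemma clique_two : (G.cliqueFinset 2).card = G.edgeFinset.card := by
  have hA := sum_cn_card G 1
  have hmap : G.cliqueFinset 1 = Finset.univ.map ⟨fun v => {v}, fun a b h => by simpa using h⟩ := by
    ext W
    simp [mem_cliqueFinset_iff, isNClique_one, eq_comm]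
    exact Iff.rfl
  have hcn : ∀ v : Fin n, cn G {v} = G.neighborFinset v := by
    intro v
    ext w
    simp [cn, mem_neighborFinset, G.adj_comm]
  rw [hmap, Finset.sum_map] at hA
  change ∑ v : Fin n, (cn G {v}).card = _ at hA
  simp only [hcn] at hA
  simp only [SimpleGraph.card_neighborFinset_eq_degree] at hA
  have hdeg := G.sum_degrees_eq_twice_card_edges
  norm_num at hA
  omega

/-- Moon–Moser inequality. -/
lemma moon_moser (s : ℕ) :
    (((s : ℝ) + 1) * (G.cliqueFinset (s + 1)).card) ^ 2
      ≤ ((G.cliqueFinset s).card : ℝ)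
        * ((s * (s + 2)) * (G.cliqueFinset (s + 2)).card + n * (G.cliqueFinset (s + 1)).card) := by
  have hCS : ((∑ W ∈ G.cliqueFinset s, ((cn G W).card : ℝ)) ^ 2)
      ≤ ((G.cliqueFinset s).card : ℝ) * ∑ W ∈ G.cliqueFinset s, ((cn G W).card : ℝ) ^ 2 :=
    sq_sum_le_card_mul_sum_sq
  have h1 : ∑ W ∈ G.cliqueFinset s, ((cn G W).card : ℝ)
      = ((s : ℝ) + 1) * (G.cliqueFinset (s + 1)).card := by
    rw [← Nat.cast_sum]
    rw [sum_cn_card G s]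
    push_cast
    ring
  have h2 : ∑ W ∈ G.cliqueFinset s, ((cn G W).card : ℝ) ^ 2
      ≤ ((s : ℝ) * (s + 2)) * (G.cliqueFinset (s + 2)).card
        + (n : ℝ) * (G.cliqueFinset (s + 1)).card := by
    have := sum_sq_bound G s
    have hcast : ∑ W ∈ G.cliqueFinset s, ((cn G W).card : ℝ) ^ 2
        = ((∑ W ∈ G.cliqueFinset s, (cn G W).card ^ 2 : ℕ) : ℝ) := by
      push_cast
      rfl
    rw [hcast]
    calc ((∑ W ∈ G.cliqueFinset s, (cn G W).card ^ 2 : ℕ) : ℝ)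
        ≤ ((s * ((s + 2) * (G.cliqueFinset (s + 2)).card)
            + n * (G.cliqueFinset (s + 1)).card : ℕ) : ℝ) := by exact_mod_cast this
      _ = ((s : ℝ) * (s + 2)) * (G.cliqueFinset (s + 2)).card
            + (n : ℝ) * (G.cliqueFinset (s + 1)).card := by push_cast; ring
  rw [h1] at hCS
  exact hCS.trans (mul_le_mul_of_nonneg_left h2 (Nat.cast_nonneg _))

end LS

set_option maxHeartbeats 1000000 in
theorem lovasz_simonovits_supersaturation (n t ℓ : ℕ) (hn : 0 < n) (ht : 0 < t)
    (hℓ : 0 < ℓ) (hℓt : ℓ ≤ t) (G : SimpleGraph (Fin n)) [DecidableRel G.Adj]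
    (hedge : ((1 : ℝ) - 1 / t) * n ^ 2 / 2 ≤ (G.edgeFinset.card : ℝ)) :
    ((n : ℝ) / t) ^ ℓ * (t.choose ℓ : ℝ) ≤ ((G.cliqueFinset ℓ).card : ℝ) := by
  set K : ℕ → ℝ := fun m => ((G.cliqueFinset m).card : ℝ) with hKdef
  have hKnn : ∀ m, 0 ≤ K m := fun m => Nat.cast_nonneg _
  have hK0 : K 0 = 1 := by simp [hKdef, LS.clique_zero]
  have hK1 : K 1 = n := by simp [hKdef, LS.clique_one]
  have hK2 : K 2 = (G.edgeFinset.card : ℝ) := by simp [hKdef, LS.clique_two]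
  have ht0 : (0:ℝ) < t := by exact_mod_cast ht
  have hn0 : (0:ℝ) < n := by exact_mod_cast hn
  have hMM : ∀ s : ℕ, (((s:ℝ)+1) * K (s+1))^2
      ≤ K s * (((s:ℝ)*((s:ℝ)+2)) * K (s+2) + (n:ℝ) * K (s+1)) := fun s => LS.moon_moser G s
  have hA : ∀ m : ℕ, ((t:ℝ) - m) * (n:ℝ) * K m ≤ ((m:ℝ)+1) * t * K (m+1) := by
    intro m
    induction m with
    | zero =>
      norm_num [hK0, hK1]
    | succ m ih =>
      show ((t:ℝ) - (m+1:ℕ)) * (n:ℝ) * K (m+1) ≤ (((m+1:ℕ):ℝ)+1) * t * K (m+2)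
      push_cast
      rcases Nat.eq_zero_or_pos m with hm0 | hm1
      · subst hm0
        norm_num
        rw [hK1, hK2]
        have htinv : (t:ℝ) * (1/t) * (n:ℝ)^2 = (n:ℝ)^2 := by field_simp
        nlinarith [mul_le_mul_of_nonneg_left hedge (by positivity : (0:ℝ) ≤ 2*t)]
      · rcases eq_or_lt_of_le (hKnn (m+1)) with hb | hb
        · have hz : ((t:ℝ) - ((m:ℝ)+1)) * (n:ℝ) * K (m+1) = 0 := by rw [← hb]; ring
          rw [hz]
          positivity
        · have hKm : 0 < K m := by
            by_contra h
            have hKm0 : K m = 0 := le_antisymm (not_lt.1 h) (hKnn m)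
            have hq := hMM m
            rw [hKm0, zero_mul] at hq
            nlinarith [hb, mul_pos (show (0:ℝ) < (m:ℝ)+1 by positivity) hb]
          by_cases htm : (t:ℝ) - ((m:ℝ)+1) ≤ 0
          · have h1 : ((t:ℝ) - ((m:ℝ)+1)) * (n:ℝ) * K (m+1) ≤ 0 := by
              have h2 : (0:ℝ) ≤ (n:ℝ) * K (m+1) := by positivity
              nlinarith
            have h2 : (0:ℝ) ≤ ((m:ℝ)+1+1) * t * K (m+2) := by positivity
            linarith
          · push_neg at htm
            have hm1' : (1:ℝ) ≤ (m:ℝ) := by exact_mod_cast hm1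
            have hmm := hMM m
            have e1 : (t:ℝ) * ((((m:ℝ)+1) * K (m+1))^2)
                ≤ (t:ℝ) * (K m * (((m:ℝ)*((m:ℝ)+2)) * K (m+2) + (n:ℝ) * K (m+1))) :=
              mul_le_mul_of_nonneg_left hmm ht0.le
            have e2 : (((t:ℝ) - m) * (n:ℝ) * K m) * (((m:ℝ)+1) * K (m+1))
                ≤ (((m:ℝ)+1) * t * K (m+1)) * (((m:ℝ)+1) * K (m+1)) :=
              mul_le_mul_of_nonneg_right ih (by positivity)
            have e3 : (m:ℝ) * K m * (((t:ℝ) - ((m:ℝ)+1)) * (n:ℝ) * K (m+1))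
                ≤ (m:ℝ) * K m * ((((m:ℝ)+1)+1) * t * K (m+2)) := by linarith [e1, e2]
            have hMa : 0 < (m:ℝ) * K m := mul_pos (by linarith) hKm
            have := (mul_le_mul_iff_right₀ hMa).1 e3
            linarith
  have hB : ∀ m : ℕ, m ≤ t → (n:ℝ)^m * (t.choose m) ≤ (t:ℝ)^m * K m := by
    intro m
    induction m with
    | zero => intro _; simp [hK0]
    | succ m ih =>
      intro hmt
      have hmt' : m ≤ t := Nat.le_of_succ_le hmt
      have hih := ih hmt'
      have hAm := hA m
      have hid : ((t:ℝ) - m) * (t.choose m) = ((m:ℝ)+1) * (t.choose (m+1)) := by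
        have h := Nat.choose_succ_right_eq t m
        have h' : ((t.choose (m+1) : ℕ) : ℝ) * (((m:ℕ)+1 : ℕ) : ℝ)
            = ((t.choose m : ℕ) : ℝ) * (((t - m : ℕ)) : ℝ) := by exact_mod_cast congrArg (Nat.cast : ℕ → ℝ) h
        rw [Nat.cast_sub hmt'] at h'
        push_cast at h'
        linarith [h']
      have htm0 : (0:ℝ) ≤ (t:ℝ) - m := by
        have : (m:ℝ) < t := by exact_mod_cast hmt
        linarith
      have s1 : (((t:ℝ) - m) * n) * ((n:ℝ)^m * (t.choose m))
          ≤ (((t:ℝ) - m) * n) * ((t:ℝ)^m * K m) :=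
        mul_le_mul_of_nonneg_left hih (mul_nonneg htm0 hn0.le)
      have s2 : (t:ℝ)^m * (((t:ℝ) - m) * (n:ℝ) * K m)
          ≤ (t:ℝ)^m * (((m:ℝ)+1) * t * K (m+1)) :=
        mul_le_mul_of_nonneg_left hAm (by positivity)
      have hid' : (n:ℝ)^m * (n:ℝ) * (((t:ℝ) - m) * (t.choose m))
          = (n:ℝ)^m * (n:ℝ) * (((m:ℝ)+1) * (t.choose (m+1))) := by rw [hid]
      have s3 : ((m:ℝ)+1) * ((n:ℝ)^(m+1) * (t.choose (m+1)))
          ≤ ((m:ℝ)+1) * ((t:ℝ)^(m+1) * K (m+1)) := by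
        have hp1 : (n:ℝ)^(m+1) = (n:ℝ)^m * n := pow_succ _ _
        have hp2 : (t:ℝ)^(m+1) = (t:ℝ)^m * t := pow_succ _ _
        rw [hp1, hp2]
        linarith [s1, s2, hid']
      have hm1pos : (0:ℝ) < (m:ℝ)+1 := by positivity
      have := (mul_le_mul_iff_right₀ hm1pos).1 s3
      push_cast
      linarith
  have hfin := hB ℓ hℓt
  rw [div_pow, div_mul_eq_mul_div, div_le_iff₀ (by positivity : (0:ℝ) < (t:ℝ)^ℓ)]
  calc (n:ℝ)^ℓ * (t.choose ℓ) ≤ (t:ℝ)^ℓ * K ℓ := hfin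
    _ = K ℓ * (t:ℝ)^ℓ := by ring
end

section
/- Let 0 < δ < 1 and let ℓ be an integer with ℓ ≥ 1/δ and ℓ ≥ 2, and let n ≥ ℓ. Then (n(1−δ)/(ℓ−1))^ℓ · C((ℓ−1)/(1−δ), ℓ) ≥ n^ℓ/ℓ^ℓ, where C(x, ℓ) = x(x−1)⋯(x−ℓ+1)/ℓ! is the generalized binomial coefficient. -/
lemma prod_range_sub_eq_factorial (n : ℕ) :
    (∏ i ∈ Finset.range n, ((n : ℝ) - i)) = Nat.factorial n := by
  have h : (∏ i ∈ Finset.range n, ((n : ℝ) - i)) =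
      ∏ i ∈ Finset.range n, ((n - i : ℕ) : ℝ) := by
    refine Finset.prod_congr rfl fun i hi => ?_
    have : i ≤ n := le_of_lt (Finset.mem_range.mp hi)
    push_cast [Nat.cast_sub this]
    ring
  rw [h, ← Nat.cast_prod]
  congr 1
  calc (∏ i ∈ Finset.range n, (n - i))
      = ∏ i ∈ Finset.range n, (n - (n - 1 - i)) := (Finset.prod_range_reflect _ n).symm
    _ = ∏ i ∈ Finset.range n, (i + 1) := by
        refine Finset.prod_congr rfl fun i hi => ?_
        have := Finset.mem_range.mp hi
        omega
    _ = Nat.factorial n := Finset.prod_range_add_one_eq_factorial n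

theorem supersat_count_large_ell (δ : ℝ) (hδ0 : 0 < δ) (hδ1 : δ < 1)
    (ℓ n : ℕ) (hℓ2 : 2 ≤ ℓ) (hℓδ : 1 / δ ≤ (ℓ : ℝ)) (hn : ℓ ≤ n) :
    (n : ℝ) ^ ℓ / (ℓ : ℝ) ^ ℓ ≤
      ((n : ℝ) * (1 - δ) / ((ℓ : ℝ) - 1)) ^ ℓ *
        ((∏ i ∈ Finset.range ℓ, (((ℓ : ℝ) - 1) / (1 - δ) - i)) / (Nat.factorial ℓ : ℝ)) := by
  set c : ℝ := 1 - δ with hcdef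
  set L : ℝ := (ℓ : ℝ) with hLdef
  have hc : 0 < c := by simp [hcdef]; linarith
  have hL2 : (2 : ℝ) ≤ L := by rw [hLdef]; exact_mod_cast hℓ2
  have hL0 : 0 < L := by linarith
  have hL1 : 0 < L - 1 := by linarith
  have hδL : 1 ≤ δ * L := by
    rw [div_le_iff₀ hδ0] at hℓδ; linarith [hℓδ]
  have hcL : c * L ≤ L - 1 := by
    have : c * L = L - δ * L := by ring
    linarith
  have hcL0 : 0 < c * L := mul_pos hc hL0
  -- per-factor bound
  have key : ∀ i ∈ Finset.range ℓ, ((L - 1) / (c * L)) * (L - i) ≤ (L - 1) / c - i := by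
    intro i hi
    have hiL : (i : ℝ) < L := by rw [hLdef]; exact_mod_cast Finset.mem_range.mp hi
    have hi0 : (0 : ℝ) ≤ i := Nat.cast_nonneg i
    have hlhs : (L - 1) / (c * L) * (L - i) = ((L - 1) * (L - i)) / (c * L) := by ring
    have hrhs : (L - 1) / c - i = ((L - 1) - i * c) / c := by field_simp
    rw [hlhs, hrhs, div_le_div_iff₀ hcL0 hc]
    nlinarith [mul_le_mul_of_nonneg_left hcL hi0]
  have hnonneg : ∀ i ∈ Finset.range ℓ, 0 ≤ ((L - 1) / (c * L)) * (L - i) := by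
    intro i hi
    have hiL : (i : ℝ) < L := by rw [hLdef]; exact_mod_cast Finset.mem_range.mp hi
    have := div_nonneg hL1.le hcL0.le
    nlinarith
  have hprod := Finset.prod_le_prod hnonneg key
  rw [Finset.prod_mul_distrib, Finset.prod_const, Finset.card_range] at hprod
  have hprodfac : (∏ x ∈ Finset.range ℓ, (L - (x : ℝ))) = (Nat.factorial ℓ : ℝ) := by
    rw [hLdef]; exact prod_range_sub_eq_factorial ℓ
  rw [hprodfac] at hprod
  have hfac : (0 : ℝ) < (Nat.factorial ℓ : ℝ) := by exact_mod_cast Nat.factorial_pos ℓ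
  have hpow : (0 : ℝ) ≤ ((n : ℝ) * c / (L - 1)) ^ ℓ := by positivity
  have h2 : ((n : ℝ) * c / (L - 1)) ^ ℓ *
      ((((L - 1) / (c * L)) ^ ℓ * (Nat.factorial ℓ : ℝ)) / (Nat.factorial ℓ : ℝ)) ≤
      ((n : ℝ) * c / (L - 1)) ^ ℓ *
        ((∏ i ∈ Finset.range ℓ, ((L - 1) / c - i)) / (Nat.factorial ℓ : ℝ)) := by
    apply mul_le_mul_of_nonneg_left _ hpow
    exact div_le_div_of_nonneg_right hprod hfac.le
  refine le_trans (le_of_eq ?_) h2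
  rw [mul_div_cancel_right₀ _ hfac.ne', ← mul_pow]
  have heq : (n : ℝ) * c / (L - 1) * ((L - 1) / (c * L)) = (n : ℝ) / L := by
    field_simp
  rw [heq, div_pow]
end

section
/- Suppose G is a graph on n vertices containing at most δ^{1/δ}·C(n,ℓ)/e^ℓ copies of K_ℓ, where 0 < δ < 1, 2 ≤ ℓ ≤ n, and n is sufficiently large (in terms of δ and ℓ). Then G has fewer than (1 − (1−δ)/(ℓ−1))·n²/2 edges. -/
open Finset

section CliqueCounting

variable {n : ℕ} (G : SimpleGraph (Fin n)) [DecidableRel G.Adj]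

private lemma filt_pair (a b : Fin n) : univ.filter (· ∈ s(a, b)) = ({a, b} : Finset (Fin n)) := by
  ext x; simp [Sym2.mem_iff]

lemma card_cliqueFinset_two : (G.cliqueFinset 2).card = G.edgeFinset.card := by
  symm
  apply Finset.card_bij (fun e _ => univ.filter (· ∈ e))
  · intro e he
    induction e with
    | _ a b =>
      rw [SimpleGraph.mem_edgeFinset, SimpleGraph.mem_edgeSet] at he
      rw [filt_pair, SimpleGraph.mem_cliqueFinset_iff]
      constructor
      · intro x hx y hy hne
        simp only [coe_insert, Set.mem_insert_iff, coe_singleton, Set.mem_singleton_iff] at hx hy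
        rcases hx with rfl | rfl <;> rcases hy with rfl | rfl <;>
          first | exact absurd rfl hne | exact he | exact he.symm
      · exact card_pair he.ne
  · intro e₁ h₁ e₂ h₂ h
    induction e₁ with
    | _ a b =>
      induction e₂ with
      | _ c d =>
        rw [filt_pair, filt_pair] at h
        have h' : ({a, b} : Set (Fin n)) = {c, d} := by
          have := Finset.coe_inj.2 h
          simpa using this
        rw [Sym2.eq_iff]
        rcases Set.pair_eq_pair_iff.1 h' with ⟨rfl, rfl⟩ | ⟨rfl, rfl⟩
        · left; exact ⟨rfl, rfl⟩
        · right; exact ⟨rfl, rfl⟩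
  · intro S hS
    rw [SimpleGraph.mem_cliqueFinset_iff] at hS
    obtain ⟨a, b, hne, rfl⟩ := Finset.card_eq_two.1 hS.2
    have hadj : G.Adj a b := hS.1 (by simp) (by simp) hne
    exact ⟨s(a, b), by simpa using hadj, filt_pair a b⟩

lemma card_cliqueFinset_one : (G.cliqueFinset 1).card = n := by
  have : G.cliqueFinset 1 = univ.map ⟨fun a => {a}, fun a b h => by simpa using h⟩ := by
    ext S
    simp [SimpleGraph.mem_cliqueFinset_iff, SimpleGraph.isNClique_one, eq_comm]
    rfl
  simp [this]

def extN (S : Finset (Fin n)) : Finset (Fin n) :=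
  Finset.univ.filter (fun v => ∀ u ∈ S, G.Adj u v)

lemma mem_extN {S : Finset (Fin n)} {v : Fin n} :
    v ∈ extN G S ↔ ∀ u ∈ S, G.Adj u v := by simp [extN]

lemma not_mem_of_mem_extN {S : Finset (Fin n)} {v : Fin n} (hv : v ∈ extN G S) : v ∉ S :=
  fun hvS => G.irrefl ((mem_extN G).1 hv v hvS)

lemma insert_mem_cliqueFinset {s : ℕ} {S : Finset (Fin n)} {v : Fin n}
    (hS : S ∈ G.cliqueFinset s) (hv : v ∈ extN G S) :
    insert v S ∈ G.cliqueFinset (s + 1) :=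
  SimpleGraph.mem_cliqueFinset_iff.2
    (((SimpleGraph.mem_cliqueFinset_iff.1 hS).insert (fun b hb => ((mem_extN G).1 hv b hb).symm)))

lemma erase_mem_cliqueFinset {s : ℕ} {T : Finset (Fin n)} {v : Fin n}
    (hT : T ∈ G.cliqueFinset (s + 1)) (hv : v ∈ T) :
    T.erase v ∈ G.cliqueFinset s := by
  rw [SimpleGraph.mem_cliqueFinset_iff] at hT ⊢
  refine ⟨hT.1.subset (coe_subset.2 (erase_subset _ _)), ?_⟩
  rw [card_erase_of_mem hv, hT.2]
  rfl

lemma mem_extN_erase {s : ℕ} {T : Finset (Fin n)} {v : Fin n}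
    (hT : T ∈ G.cliqueFinset (s + 1)) (hv : v ∈ T) :
    v ∈ extN G (T.erase v) := by
  rw [mem_extN]
  intro u hu
  rw [mem_erase] at hu
  exact (SimpleGraph.mem_cliqueFinset_iff.1 hT).1 hu.2 hv hu.1

lemma sum_extN_card (s : ℕ) :
    ∑ S ∈ G.cliqueFinset s, (extN G S).card = (s + 1) * (G.cliqueFinset (s + 1)).card := by
  calc ∑ S ∈ G.cliqueFinset s, (extN G S).card
      = ((G.cliqueFinset s).sigma (fun S => extN G S)).card := (card_sigma _ _).symm
    _ = ((G.cliqueFinset (s + 1)).sigma (fun T => T)).card := by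
        apply card_bij' (fun x hx => (⟨insert x.2 x.1, x.2⟩ : Σ _ : Finset (Fin n), Fin n))
          (fun y hy => (⟨y.1.erase y.2, y.2⟩ : Σ _ : Finset (Fin n), Fin n))
        · rintro ⟨S, v⟩ hx
          rw [mem_sigma] at hx ⊢
          exact ⟨insert_mem_cliqueFinset G hx.1 hx.2, mem_insert_self _ _⟩
        · rintro ⟨T, v⟩ hy
          rw [mem_sigma] at hy ⊢
          exact ⟨erase_mem_cliqueFinset G hy.1 hy.2, mem_extN_erase G hy.1 hy.2⟩
        · rintro ⟨S, v⟩ hx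
          rw [mem_sigma] at hx
          simp [Finset.erase_insert (not_mem_of_mem_extN G hx.2)]
        · rintro ⟨T, v⟩ hy
          rw [mem_sigma] at hy
          simp [Finset.insert_erase hy.2]
    _ = ∑ T ∈ G.cliqueFinset (s + 1), T.card := card_sigma _ _
    _ = (s + 1) * (G.cliqueFinset (s + 1)).card := by
        rw [Finset.sum_congr rfl (fun T hT => (SimpleGraph.mem_cliqueFinset_iff.1 hT).2),
          Finset.sum_const, smul_eq_mul, mul_comm]

lemma sum_sum_erase (s : ℕ) :
    ∑ S ∈ G.cliqueFinset (s + 1), ∑ u ∈ S, (extN G (S.erase u)).card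
      = ∑ Q ∈ G.cliqueFinset s, (extN G Q).card ^ 2 := by
  rw [← Finset.sum_sigma (G.cliqueFinset (s+1)) (fun S => S)
      (fun x => (extN G (x.1.erase x.2)).card)]
  have : ∀ Q ∈ G.cliqueFinset s, (extN G Q).card ^ 2 = ∑ _u ∈ extN G Q, (extN G Q).card := by
    intro Q _; rw [Finset.sum_const, smul_eq_mul, sq]
  rw [Finset.sum_congr rfl this,
    ← Finset.sum_sigma (G.cliqueFinset s) (fun Q => extN G Q) (fun y => (extN G y.1).card)]
  apply Finset.sum_bij' (fun x hx => (⟨x.1.erase x.2, x.2⟩ : Σ _ : Finset (Fin n), Fin n))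
    (fun y hy => (⟨insert y.2 y.1, y.2⟩ : Σ _ : Finset (Fin n), Fin n))
  · rintro ⟨S, v⟩ hx
    rw [mem_sigma] at hx ⊢
    exact ⟨erase_mem_cliqueFinset G hx.1 hx.2, mem_extN_erase G hx.1 hx.2⟩
  · rintro ⟨Q, v⟩ hy
    rw [mem_sigma] at hy ⊢
    exact ⟨insert_mem_cliqueFinset G hy.1 hy.2, mem_insert_self _ _⟩
  · rintro ⟨S, v⟩ hx
    rw [mem_sigma] at hx
    simp [Finset.insert_erase hx.2]
  · rintro ⟨Q, v⟩ hy
    rw [mem_sigma] at hy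
    simp [Finset.erase_insert (not_mem_of_mem_extN G hy.2)]
  · rintro ⟨S, v⟩ hx
    rfl

lemma local_bound {s : ℕ} {S : Finset (Fin n)} (hS : S ∈ G.cliqueFinset (s + 1)) :
    (∑ u ∈ S, (extN G (S.erase u)).card) + (extN G S).card
      ≤ n + (s + 1) * (extN G S).card := by
  classical
  have hclique := SimpleGraph.mem_cliqueFinset_iff.1 hS
  set A : Fin n → Finset (Fin n) := fun u => (extN G (S.erase u)).erase u with hA
  -- card of extN (S.erase u) = card A u + 1
  have hmem : ∀ u ∈ S, u ∈ extN G (S.erase u) := by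
    intro u hu
    rw [mem_extN]
    intro w hw
    rw [mem_erase] at hw
    exact hclique.1 hw.2 hu hw.1
  have hcard : ∀ u ∈ S, (extN G (S.erase u)).card = (A u).card + 1 := by
    intro u hu
    rw [hA]
    rw [card_erase_of_mem (hmem u hu)]
    have : 0 < (extN G (S.erase u)).card := card_pos.2 ⟨u, hmem u hu⟩
    omega
  rw [Finset.sum_congr rfl hcard, Finset.sum_add_distrib, Finset.sum_const, smul_eq_mul, mul_one,
    hclique.2]
  -- now: ∑ u ∈ S, (A u).card + (s+1) + q S ≤ n + (s+1) * q S
  -- rewrite ∑ u (A u).card as ∑ v ∈ univ, (S.filter (v ∈ A ·)).card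
  have h1 : ∀ u : Fin n, (A u).card = ∑ v ∈ univ, if v ∈ A u then 1 else 0 := fun u => by
    rw [← card_filter, Finset.filter_mem_eq_inter, Finset.univ_inter]
  have hswap : ∑ u ∈ S, (A u).card
      = ∑ v ∈ univ, (S.filter (fun u => v ∈ A u)).card := by
    calc ∑ u ∈ S, (A u).card = ∑ u ∈ S, ∑ v ∈ univ, if v ∈ A u then 1 else 0 := by
          simp_rw [h1]
      _ = ∑ v ∈ univ, ∑ u ∈ S, if v ∈ A u then 1 else 0 := Finset.sum_comm
      _ = ∑ v ∈ univ, (S.filter (fun u => v ∈ A u)).card := by simp_rw [card_filter]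
  have hpoint : ∀ v : Fin n, (S.filter (fun u => v ∈ A u)).card
      + ((if v ∈ extN G S then 1 else 0) + (if v ∈ S then 1 else 0))
      ≤ 1 + (if v ∈ extN G S then s + 1 else 0) := by
    intro v
    by_cases hvext : v ∈ extN G S
    · have hvS : v ∉ S := not_mem_of_mem_extN G hvext
      have : (S.filter (fun u => v ∈ A u)).card ≤ s + 1 :=
        le_trans (card_le_card (filter_subset _ _)) (le_of_eq hclique.2)
      simp only [hvext, hvS, if_true, if_false]
      omega
    · by_cases hvS : v ∈ S
      · have hemp : S.filter (fun u => v ∈ A u) = ∅ := by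
          rw [filter_eq_empty_iff]
          intro u hu hvA
          rw [hA, mem_erase] at hvA
          exact G.irrefl ((mem_extN G).1 hvA.2 v (mem_erase.2 ⟨hvA.1, hvS⟩))
        simp only [hemp, card_empty, hvext, hvS, if_true, if_false]
        omega
      · have hone : (S.filter (fun u => v ∈ A u)).card ≤ 1 := by
          rw [card_le_one]
          have : ¬ ∀ u ∈ S, G.Adj u v := fun h => hvext ((mem_extN G).2 h)
          push_neg at this
          obtain ⟨w, hwS, hwv⟩ := this
          have key : ∀ u ∈ S.filter (fun u => v ∈ A u), u = w := by
            intro u hu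
            rw [mem_filter] at hu
            by_contra hne
            have hvA := hu.2
            rw [hA, mem_erase] at hvA
            exact hwv ((mem_extN G).1 hvA.2 w (mem_erase.2 ⟨fun h => hne h.symm, hwS⟩))
          intro a ha b hb
          rw [key a ha, key b hb]
        simp only [hvext, hvS, if_false]
        omega
  have hsum := Finset.sum_le_sum (fun v (_ : v ∈ univ) => hpoint v)
  rw [Finset.sum_add_distrib, Finset.sum_add_distrib, Finset.sum_add_distrib] at hsum
  have hq : ∑ v ∈ univ, (if v ∈ extN G S then 1 else 0) = (extN G S).card := by
    rw [← card_filter, Finset.filter_mem_eq_inter, Finset.univ_inter]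
  have hscard : ∑ v ∈ univ, (if v ∈ S then 1 else 0) = s + 1 := by
    rw [← card_filter, Finset.filter_mem_eq_inter, Finset.univ_inter, hclique.2]
  have hone : ∑ _v ∈ (univ : Finset (Fin n)), 1 = n := by
    rw [Finset.sum_const, smul_eq_mul, mul_one, card_univ, Fintype.card_fin]
  have hlast : ∑ v ∈ univ, (if v ∈ extN G S then s + 1 else 0)
      = (s + 1) * (extN G S).card := by
    rw [← Finset.sum_filter, Finset.filter_mem_eq_inter, Finset.univ_inter, Finset.sum_const,
      smul_eq_mul, mul_comm]
  rw [hq, hscard, hone, hlast, ← hswap] at hsum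
  omega

lemma moon_moser (s : ℕ) :
    (s + 1) ^ 2 * (G.cliqueFinset (s + 1)).card ^ 2
      + (G.cliqueFinset s).card * ((s + 2) * (G.cliqueFinset (s + 2)).card)
    ≤ (G.cliqueFinset s).card *
        (n * (G.cliqueFinset (s + 1)).card
          + (s + 1) * ((s + 2) * (G.cliqueFinset (s + 2)).card)) := by
  have hCS : ((s + 1) * (G.cliqueFinset (s + 1)).card) ^ 2
      ≤ (G.cliqueFinset s).card * ∑ Q ∈ G.cliqueFinset s, (extN G Q).card ^ 2 := by
    rw [← sum_extN_card G s]
    exact sq_sum_le_card_mul_sum_sq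
  have hC : (∑ Q ∈ G.cliqueFinset s, (extN G Q).card ^ 2)
        + (s + 2) * (G.cliqueFinset (s + 2)).card
      ≤ n * (G.cliqueFinset (s + 1)).card
        + (s + 1) * ((s + 2) * (G.cliqueFinset (s + 2)).card) := by
    have := Finset.sum_le_sum (fun S (hS : S ∈ G.cliqueFinset (s+1)) => local_bound G (s := s) hS)
    rw [Finset.sum_add_distrib, sum_sum_erase G s, sum_extN_card G (s + 1),
      Finset.sum_add_distrib, Finset.sum_const, smul_eq_mul, mul_comm,
      ← Finset.mul_sum, sum_extN_card G (s + 1)] at this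
    linarith [this]
  calc (s + 1) ^ 2 * (G.cliqueFinset (s + 1)).card ^ 2
        + (G.cliqueFinset s).card * ((s + 2) * (G.cliqueFinset (s + 2)).card)
      = ((s + 1) * (G.cliqueFinset (s + 1)).card) ^ 2
        + (G.cliqueFinset s).card * ((s + 2) * (G.cliqueFinset (s + 2)).card) := by ring
    _ ≤ (G.cliqueFinset s).card * (∑ Q ∈ G.cliqueFinset s, (extN G Q).card ^ 2)
        + (G.cliqueFinset s).card * ((s + 2) * (G.cliqueFinset (s + 2)).card) := by
        exact Nat.add_le_add_right hCS _
    _ = (G.cliqueFinset s).card * ((∑ Q ∈ G.cliqueFinset s, (extN G Q).card ^ 2)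
        + (s + 2) * (G.cliqueFinset (s + 2)).card) := by ring
    _ ≤ _ := Nat.mul_le_mul_left _ hC

end CliqueCounting

section Analytic

noncomputable def Fent (x : ℝ) : ℝ := (1 - x) * Real.log (1 - x) + x

lemma mul_log_le {u v : ℝ} (hu : 0 < u) (hv : 0 < v) :
    u * Real.log v - u * Real.log u ≤ v - u := by
  have hlog := Real.log_le_sub_one_of_pos (div_pos hv hu)
  rw [Real.log_div hv.ne' hu.ne'] at hlog
  have h2 := mul_le_mul_of_nonneg_left hlog hu.le
  have h3 : u * (v / u - 1) = v - u := by field_simp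
  nlinarith

lemma Fent_step {x h : ℝ} (hh : 0 ≤ h) (hu : 0 < 1 - (x + h)) :
    Fent x - Fent (x + h) ≤ h * Real.log (1 - x) := by
  have key := mul_log_le (u := 1 - (x + h)) (v := 1 - x) hu (by linarith)
  rw [Fent, Fent]
  linarith [key]

lemma Fent_nonneg {a : ℝ} (ha1 : a < 1) : 0 ≤ Fent a := by
  have hv : 0 < 1 - a := by linarith
  have hlog := Real.log_le_sub_one_of_pos (show 0 < 1 / (1 - a) by positivity)
  rw [Real.log_div one_ne_zero (ne_of_gt hv), Real.log_one] at hlog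
  have h2 : (1 - a) * (0 - Real.log (1 - a)) ≤ (1 - a) * (1 / (1 - a) - 1) :=
    mul_le_mul_of_nonneg_left hlog hv.le
  have h3 : (1 - a) * (1 / (1 - a) - 1) = a := by field_simp; ring
  rw [Fent]
  nlinarith

lemma final_numeric (δ L a S T : ℝ) (m : ℕ) (hδ0 : 0 < δ) (hδ1 : δ < 1) (hL : L < 0)
    (ha : 0 < a) (hA : ((m : ℝ) + 1) * a = 1 - δ) (hT : δ * T = L)
    (hS : -(δ * L + 1 - δ) ≤ a * S) :
    T - ((m : ℝ) + 2) < S + L := by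
  have h2 : δ * (-(δ * L + 1 - δ)) ≤ δ * (a * S) :=
    mul_le_mul_of_nonneg_left hS hδ0.le
  have e4 : 0 < δ * a := mul_pos hδ0 ha
  have eT : δ * a * T = a * L := by rw [mul_comm δ a, mul_assoc, hT]
  have eA : δ * (((m : ℝ) + 1) * a) = δ * (1 - δ) := by rw [hA]
  have e2 : a * L * (1 - δ) < 0 :=
    mul_neg_of_neg_of_pos (mul_neg_of_pos_of_neg ha hL) (by linarith)
  have e3 : δ * (δ * L) < 0 := mul_neg_of_pos_of_neg hδ0 (mul_neg_of_pos_of_neg hδ0 hL)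
  nlinarith [h2, e4, eT, eA, e2, e3]

lemma analytic_bound (δ : ℝ) (hδ0 : 0 < δ) (hδ1 : δ < 1) (ℓ : ℕ) (hℓ : 2 ≤ ℓ) :
    δ ^ (1 / δ) / Real.exp 1 ^ ℓ
      < ∏ i ∈ Finset.range ℓ, (1 - (i : ℝ) * ((1 - δ) / ((ℓ : ℝ) - 1))) := by
  obtain ⟨m, rfl⟩ : ∃ m, ℓ = m + 2 := ⟨ℓ - 2, by omega⟩
  have hgc : ((m + 2 : ℕ) : ℝ) - 1 = (m : ℝ) + 1 := by push_cast; ring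
  rw [hgc]
  have hm1 : (0 : ℝ) < (m : ℝ) + 1 := by positivity
  set a : ℝ := (1 - δ) / ((m : ℝ) + 1) with ha_def
  have ha : 0 < a := div_pos (by linarith) hm1
  have hA : ((m : ℝ) + 1) * a = 1 - δ := by
    rw [ha_def, mul_div_cancel₀]
    exact ne_of_gt hm1
  -- each factor is at least δ
  have hfac : ∀ i ∈ Finset.range (m + 2), δ ≤ 1 - (i : ℝ) * a := by
    intro i hi
    rw [mem_range] at hi
    have hile : (i : ℝ) ≤ (m : ℝ) + 1 := by
      have : i ≤ m + 1 := by omega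
      exact_mod_cast this
    have h1 : (i : ℝ) * a ≤ ((m : ℝ) + 1) * a := mul_le_mul_of_nonneg_right hile ha.le
    rw [hA] at h1
    linarith
  have hprodpos : 0 < ∏ i ∈ Finset.range (m + 2), (1 - (i : ℝ) * a) := by
    apply Finset.prod_pos
    intro i hi
    linarith [hfac i hi]
  have hL : Real.log δ < 0 := Real.log_neg hδ0 hδ1
  -- rewrite LHS as exponential
  have hlhs : δ ^ (1 / δ) / Real.exp 1 ^ (m + 2)
      = Real.exp (Real.log δ * (1 / δ) - ((m : ℝ) + 2)) := by
    rw [Real.rpow_def_of_pos hδ0, Real.exp_one_pow, Real.exp_sub]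
    congr 1
    push_cast
    ring
  rw [hlhs, ← Real.exp_log hprodpos]
  apply Real.exp_lt_exp.2
  -- log of product = sum of logs
  have hlogprod : Real.log (∏ i ∈ Finset.range (m + 2), (1 - (i : ℝ) * a))
      = ∑ i ∈ Finset.range (m + 2), Real.log (1 - (i : ℝ) * a) :=
    Real.log_prod (fun i hi => ne_of_gt (by linarith [hfac i hi]))
  rw [hlogprod]
  -- expand the sum: first term (i = 0) is log 1 = 0, last is log δ
  rw [Finset.sum_range_succ' (fun i => Real.log (1 - (i : ℝ) * a)) (m + 1)]
  rw [Finset.sum_range_succ (fun i => Real.log (1 - ((i : ℕ) + 1 : ℕ) * a)) m]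
  have hzero : Real.log (1 - ((0 : ℕ) : ℝ) * a) = 0 := by norm_num
  have hlast : Real.log (1 - ((m + 1 : ℕ) : ℝ) * a) = Real.log δ := by
    push_cast
    rw [hA]
    norm_num
  rw [hzero, hlast, add_zero]
  -- telescoping bound for the middle sum
  set S : ℝ := ∑ i ∈ Finset.range m, Real.log (1 - ((i : ℕ) + 1 : ℕ) * a) with hS_def
  set f : ℕ → ℝ := fun j => Fent (((j : ℝ) + 1) * a) with hf
  have htel : Fent a - Fent (1 - δ) ≤ a * S := by
    have hstep : ∀ i ∈ Finset.range m,
        f i - f (i + 1) ≤ a * Real.log (1 - ((i : ℕ) + 1 : ℕ) * a) := by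
      intro i hi
      rw [mem_range] at hi
      rw [hf]
      simp only []
      have h2 : 0 < 1 - (((i : ℝ) + 1) * a + a) := by
        have hle : ((i : ℝ) + 1 + 1) ≤ (m : ℝ) + 1 := by
          have : i + 2 ≤ m + 1 := by omega
          exact_mod_cast this
        nlinarith [mul_le_mul_of_nonneg_right hle ha.le, hA, hδ0]
      have hkey := Fent_step (x := ((i : ℝ) + 1) * a) (h := a) ha.le h2
      have e1 : ((↑(i + 1) : ℝ) + 1) * a = ((i : ℝ) + 1) * a + a := by push_cast; ring
      have e2 : ((↑(i + 1) : ℕ) : ℝ) = (i : ℝ) + 1 := by push_cast; ring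
      rw [e1, e2]
      exact hkey
    calc Fent a - Fent (1 - δ) = f 0 - f m := by
          rw [hf]
          simp only []
          norm_num
          rw [hA]
      _ = ∑ i ∈ Finset.range m, (f i - f (i + 1)) := (Finset.sum_range_sub' f m).symm
      _ ≤ ∑ i ∈ Finset.range m, a * Real.log (1 - ((i : ℕ) + 1 : ℕ) * a) :=
          Finset.sum_le_sum hstep
      _ = a * S := by rw [hS_def, Finset.mul_sum]
  have hFa : 0 ≤ Fent a := Fent_nonneg (by nlinarith [hA, hδ0])
  have hFd : Fent (1 - δ) = δ * Real.log δ + 1 - δ := by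
    rw [Fent, show (1 : ℝ) - (1 - δ) = δ by ring]
    ring
  have hSfin : -(δ * Real.log δ + 1 - δ) ≤ a * S := by
    rw [← hFd]
    linarith
  have := final_numeric δ (Real.log δ) a S (Real.log δ * (1 / δ)) m hδ0 hδ1 hL ha hA
    (by field_simp) hSfin
  push_cast
  linarith [this]

end Analytic

lemma clique_recursion (n ℓ : ℕ) (a : ℝ) (k : ℕ → ℕ)
    (hℓ : 2 ≤ ℓ) (hnpos : 0 < (n : ℝ)) (ha0 : 0 < a)
    (hcoef : ∀ s : ℕ, s + 1 ≤ ℓ → 0 < 1 - (s : ℝ) * a)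
    (hk1 : k 1 = n)
    (hbase : (n : ℝ) * (1 - a) * (n : ℝ) ≤ 2 * (k 2 : ℝ))
    (hMM : ∀ s : ℕ, (s + 1) ^ 2 * (k (s + 1)) ^ 2 + k s * ((s + 2) * k (s + 2))
      ≤ k s * (n * k (s + 1) + (s + 1) * ((s + 2) * k (s + 2)))) :
    ((n : ℝ) ^ ℓ / (Nat.factorial ℓ : ℝ)) * ∏ i ∈ Finset.range ℓ, (1 - (i : ℝ) * a)
      ≤ (k ℓ : ℝ) := by
  set c : ℕ → ℝ := fun s => ∏ i ∈ Finset.range s, ((n : ℝ) * (1 - (i : ℝ) * a) / ((i : ℝ) + 1))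
    with hc
  have hcdef : ∀ s : ℕ,
      c s = ∏ i ∈ Finset.range s, ((n : ℝ) * (1 - (i : ℝ) * a) / ((i : ℝ) + 1)) :=
    fun _ => rfl
  have hcsucc : ∀ s : ℕ, c (s + 1) = c s * ((n : ℝ) * (1 - (s : ℝ) * a) / ((s : ℝ) + 1)) := by
    intro s
    rw [hcdef, hcdef]
    exact Finset.prod_range_succ _ s
  have hcstep : ∀ s : ℕ, 0 ≤ 1 - (s : ℝ) * a → c s ≤ (k s : ℝ) →
      (n : ℝ) * (1 - (s : ℝ) * a) * (k s) ≤ ((s : ℝ) + 1) * (k (s + 1)) →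
      c (s + 1) ≤ (k (s + 1) : ℝ) := by
    intro s hnn hcs hr
    rw [hcsucc s]
    have hspos : (0 : ℝ) < (s : ℝ) + 1 := by positivity
    have hquot : 0 ≤ (n : ℝ) * (1 - (s : ℝ) * a) / ((s : ℝ) + 1) :=
      div_nonneg (mul_nonneg hnpos.le hnn) hspos.le
    have h1 : c s * ((n : ℝ) * (1 - (s : ℝ) * a) / ((s : ℝ) + 1))
        ≤ (k s : ℝ) * ((n : ℝ) * (1 - (s : ℝ) * a) / ((s : ℝ) + 1)) :=
      mul_le_mul_of_nonneg_right hcs hquot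
    have h2 : (k s : ℝ) * ((n : ℝ) * (1 - (s : ℝ) * a) / ((s : ℝ) + 1)) ≤ (k (s + 1) : ℝ) := by
      rw [mul_div_assoc', div_le_iff₀ hspos]
      nlinarith [hr]
    linarith
  have key : ∀ s : ℕ, 1 ≤ s → s + 1 ≤ ℓ →
      (0 < (k s : ℝ)) ∧ (c s ≤ (k s : ℝ)) ∧
      ((n : ℝ) * (1 - (s : ℝ) * a) * (k s) ≤ ((s : ℝ) + 1) * (k (s + 1))) ∧
      (c (s + 1) ≤ (k (s + 1) : ℝ)) := by
    intro s hs1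
    induction s, hs1 using Nat.le_induction with
    | base =>
      intro h2ℓ
      have hpos1 : 0 < (k 1 : ℝ) := by rw [hk1]; exact hnpos
      have hc1 : c 1 = (n : ℝ) := by
        rw [hcdef 1, Finset.prod_range_one]
        norm_num
      have hc1le : c 1 ≤ (k 1 : ℝ) := by rw [hc1, hk1]
      have hratio : (n : ℝ) * (1 - ((1 : ℕ) : ℝ) * a) * (k 1) ≤ (((1 : ℕ) : ℝ) + 1) * (k (1 + 1)) := by
        rw [hk1]
        push_cast
        nlinarith [hbase]
      have hnn1 : (0 : ℝ) ≤ 1 - ((1 : ℕ) : ℝ) * a := by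
        have := hcoef 1 h2ℓ
        linarith
      exact ⟨hpos1, hc1le, hratio, hcstep 1 hnn1 hc1le hratio⟩
    | succ s hs ih =>
      intro hsℓ
      obtain ⟨hpos, hcs, hr, hcs1⟩ := ih (by omega)
      have hco : 0 < 1 - (s : ℝ) * a := hcoef s (by omega)
      have hco1 : 0 < 1 - ((s : ℝ) + 1) * a := by
        have := hcoef (s + 1) hsℓ
        push_cast at this
        linarith
      have hpos1 : 0 < (k (s + 1) : ℝ) := by
        have hlhs : 0 < (n : ℝ) * (1 - (s : ℝ) * a) * (k s) :=
          mul_pos (mul_pos hnpos hco) hpos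
        have h0 := lt_of_lt_of_le hlhs hr
        nlinarith [h0, show (0:ℝ) ≤ (k (s+1) : ℝ) from Nat.cast_nonneg _]
      have hMMR : ((s : ℝ) + 1) ^ 2 * (k (s + 1) : ℝ) ^ 2
          + (k s : ℝ) * (((s : ℝ) + 2) * (k (s + 2) : ℝ))
          ≤ (k s : ℝ) * ((n : ℝ) * (k (s + 1) : ℝ)
            + ((s : ℝ) + 1) * (((s : ℝ) + 2) * (k (s + 2) : ℝ))) := by
        exact_mod_cast hMM s
      have hsR : (1 : ℝ) ≤ (s : ℝ) := Nat.one_le_cast.2 hs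
      have hP : 0 ≤ (((s : ℝ) + 1) * (k (s + 1) : ℝ)) *
          ((((s : ℝ) + 1) * (k (s + 1) : ℝ)) - (n : ℝ) * (1 - (s : ℝ) * a) * (k s)) := by
        apply mul_nonneg (mul_nonneg (by linarith) hpos1.le)
        linarith
      have hnewratio : (n : ℝ) * (1 - ((s : ℝ) + 1) * a) * (k (s + 1))
          ≤ ((s : ℝ) + 2) * (k (s + 2)) := by
        have hmul : ((s : ℝ) * (k s)) * ((n : ℝ) * (1 - ((s : ℝ) + 1) * a) * (k (s + 1)))
            ≤ ((s : ℝ) * (k s)) * (((s : ℝ) + 2) * (k (s + 2))) := by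
          nlinarith [hMMR, hP]
        exact le_of_mul_le_mul_left hmul (mul_pos (by linarith) hpos)
      have hratio' : (n : ℝ) * (1 - ((s + 1 : ℕ) : ℝ) * a) * (k (s + 1))
          ≤ (((s + 1 : ℕ) : ℝ) + 1) * (k (s + 1 + 1)) := by
        push_cast
        push_cast at hnewratio
        linarith [hnewratio]
      have hnn1 : (0 : ℝ) ≤ 1 - ((s + 1 : ℕ) : ℝ) * a := by
        push_cast
        linarith
      exact ⟨hpos1, hcs1, hratio', hcstep (s + 1) hnn1 hcs1 hratio'⟩
  obtain ⟨m, rfl⟩ : ∃ m, ℓ = m + 1 := ⟨ℓ - 1, by omega⟩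
  obtain ⟨-, -, -, hfin⟩ := key m (by omega) (by omega)
  have hcℓ : c (m + 1) = ((n : ℝ) ^ (m + 1) / (Nat.factorial (m + 1) : ℝ)) *
      ∏ i ∈ Finset.range (m + 1), (1 - (i : ℝ) * a) := by
    rw [hcdef (m + 1), Finset.prod_div_distrib, Finset.prod_mul_distrib, Finset.prod_const,
      card_range]
    have hfact : (∏ i ∈ Finset.range (m + 1), ((i : ℝ) + 1)) = (Nat.factorial (m + 1) : ℝ) := by
      rw [← Finset.prod_range_add_one_eq_factorial (m + 1)]
      push_cast
      rfl
    rw [hfact]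
    ring
  rw [← hcℓ]
  exact hfin

theorem few_cliques_implies_few_edges (δ : ℝ) (hδ0 : 0 < δ) (hδ1 : δ < 1)
    (ℓ : ℕ) (hℓ : 2 ≤ ℓ) :
    ∃ N : ℕ, ∀ n : ℕ, N ≤ n → ℓ ≤ n →
      ∀ (G : SimpleGraph (Fin n)) (_ : DecidableRel G.Adj),
        ((G.cliqueFinset ℓ).card : ℝ) ≤ δ ^ (1 / δ) * (n.choose ℓ : ℝ) / Real.exp 1 ^ ℓ →
        ((G.edgeFinset.card : ℝ) < (1 - (1 - δ) / ((ℓ : ℝ) - 1)) * (n : ℝ) ^ 2 / 2) := by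
  refine ⟨0, fun n _ hn G inst hK => ?_⟩
  by_contra hcon
  push_neg at hcon
  set a : ℝ := (1 - δ) / ((ℓ : ℝ) - 1) with ha_def
  have hℓR : (1 : ℝ) ≤ (ℓ : ℝ) - 1 := by
    have : (2 : ℝ) ≤ (ℓ : ℝ) := by exact_mod_cast hℓ
    linarith
  have ha0 : 0 < a := div_pos (by linarith) (by linarith)
  have haℓ : ((ℓ : ℝ) - 1) * a = 1 - δ := by
    rw [ha_def, mul_div_cancel₀]
    linarith
  have hnpos : 0 < (n : ℝ) := by
    have : 0 < n := by omega
    exact_mod_cast this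
  have hcoef : ∀ s : ℕ, s + 1 ≤ ℓ → 0 < 1 - (s : ℝ) * a := by
    intro s hs
    have hsle : (s : ℝ) ≤ (ℓ : ℝ) - 1 := by
      have : (s : ℝ) + 1 ≤ (ℓ : ℝ) := by exact_mod_cast hs
      linarith
    have := mul_le_mul_of_nonneg_right hsle ha0.le
    rw [haℓ] at this
    linarith
  have hbase : (n : ℝ) * (1 - a) * (n : ℝ) ≤ 2 * ((G.cliqueFinset 2).card : ℝ) := by
    have h2 : ((G.cliqueFinset 2).card : ℝ) = (G.edgeFinset.card : ℝ) := by
      exact_mod_cast congrArg (Nat.cast : ℕ → ℝ) (card_cliqueFinset_two G)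
    rw [h2]
    nlinarith [hcon]
  have hrec := clique_recursion n ℓ a (fun i => (G.cliqueFinset i).card) hℓ hnpos ha0 hcoef
    (card_cliqueFinset_one G) hbase (fun s => moon_moser G s)
  have hprod := analytic_bound δ hδ0 hδ1 ℓ hℓ
  have hpow : 0 < (n : ℝ) ^ ℓ / (Nat.factorial ℓ : ℝ) := by positivity
  have hchoose : ((n.choose ℓ : ℝ)) ≤ (n : ℝ) ^ ℓ / (Nat.factorial ℓ : ℝ) :=
    Nat.choose_le_pow_div ℓ n
  have hrpos : 0 < δ ^ (1 / δ) / Real.exp 1 ^ ℓ :=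
    div_pos (Real.rpow_pos_of_pos hδ0 _) (by positivity)
  have hfinal : δ ^ (1 / δ) * (n.choose ℓ : ℝ) / Real.exp 1 ^ ℓ
      < ((G.cliqueFinset ℓ).card : ℝ) := by
    calc δ ^ (1 / δ) * (n.choose ℓ : ℝ) / Real.exp 1 ^ ℓ
        = (n.choose ℓ : ℝ) * (δ ^ (1 / δ) / Real.exp 1 ^ ℓ) := by ring
      _ ≤ ((n : ℝ) ^ ℓ / (Nat.factorial ℓ : ℝ)) * (δ ^ (1 / δ) / Real.exp 1 ^ ℓ) :=
          mul_le_mul_of_nonneg_right hchoose hrpos.le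
      _ < ((n : ℝ) ^ ℓ / (Nat.factorial ℓ : ℝ)) *
            ∏ i ∈ Finset.range ℓ, (1 - (i : ℝ) * a) := by
          apply mul_lt_mul_of_pos_left _ hpow
          rw [ha_def]
          exact hprod
      _ ≤ ((G.cliqueFinset ℓ).card : ℝ) := hrec
  exact absurd hK (not_le.2 hfinal)
end
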